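/- Let (m_n)_{n∈ℕ} be a sequence of positive reals and consider the BPVE with geometric offspring distributions ρ_n(i) := m_n^i/(1+m_n)^{i+1} for i ∈ ℕ (whose generating function is Φ_n(z) = 1/(1+m_n(1−z)) and whose first moment is m_n). If ∑_{n=0}^∞ (∏_{j=0}^{n} m_j)^{−1} < ∞, then the BPVE survives, i.e. p_e < 1. -/

import Mathlib

open Filter ENNReal

/-- Probability generating function `Φ_n(z) := ∑_i ρ_n(i) z^i` of the `n`-th offspring
distribution of a branching process in varying environment (BPVE). -/
noncomputable def Phi (ρ : ℕ → ℕ → ℝ) (n : ℕ) (z : ℝ) : ℝ :=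
  ∑' i : ℕ, ρ n i * z ^ i

/-- The iterated generating functions `H_0(z) := z`, `H_{n+1} := H_n ∘ Φ_n`;
`H_n(0)` is the probability of extinction by generation `n`, and the extinction
probability is `p_e = lim_n H_n(0)`. -/
noncomputable def Hseq (ρ : ℕ → ℕ → ℝ) : ℕ → ℝ → ℝ
  | 0 => fun z => z
  | n + 1 => fun z => Hseq ρ n (Phi ρ n z)

/-- First moment `m_n := ∑_i i ρ_n(i) ∈ [0,∞]` of the `n`-th offspring distribution. -/
noncomputable def mom (ρ : ℕ → ℕ → ℝ) (n : ℕ) : ℝ≥0∞ :=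
  ∑' i : ℕ, (i : ℝ≥0∞) * ENNReal.ofReal (ρ n i)

/-- Second moment `m_n⁽²⁾ := ∑_i i² ρ_n(i) ∈ [0,∞]` of the `n`-th offspring
distribution. -/
noncomputable def mom2 (ρ : ℕ → ℕ → ℝ) (n : ℕ) : ℝ≥0∞ :=
  ∑' i : ℕ, (i : ℝ≥0∞) ^ 2 * ENNReal.ofReal (ρ n i)

/-!
Each geometric generating function `Φ_n(z) = 1/(1 + m_n(1 - z))` is a Möbius map, and in the
coordinate `u = 1/(1 - z)` it becomes affine: `u ↦ 1 + u/m_n`. Composing these maps gives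
`1/(1 - H_n(0)) = ∑_{k ≤ n} (∏_{j<k} m_j)⁻¹`, which stays bounded by `1 + ∑_n (∏_{j≤n} m_j)⁻¹`
under the hypothesis, so `H_n(0)` stays uniformly below `1`.
-/

open Finset

noncomputable section

def geomOffspring (m : ℕ → ℝ) : ℕ → ℕ → ℝ := fun n i => m n ^ i / (1 + m n) ^ (i + 1)

def invProd (m : ℕ → ℝ) (n : ℕ) : ℝ := (∏ j ∈ range n, m j)⁻¹

end

lemma hseq_succ_apply (ρ : ℕ → ℕ → ℝ) (n : ℕ) (z : ℝ) :
    Hseq ρ (n + 1) z = Hseq ρ n (Phi ρ n z) :=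
  rfl

lemma invProd_succ (m : ℕ → ℝ) (n : ℕ) : invProd m (n + 1) = invProd m n * (m n)⁻¹ := by
  simp only [invProd, prod_range_succ, mul_inv]

section

variable {m : ℕ → ℝ}

lemma invProd_pos (hm : ∀ n, 0 < m n) (n : ℕ) : 0 < invProd m n :=
  inv_pos.2 (prod_pos fun j _ => hm j)

lemma phi_geomOffspring {n : ℕ} (hm : 0 < m n) {z : ℝ} (hz₀ : -1 ≤ z) (hz₁ : z ≤ 1) :
    Phi (geomOffspring m) n z = (1 + m n * (1 - z))⁻¹ := by
  have hm1 : 0 < 1 + m n := by linarith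
  have hratio : |m n * z / (1 + m n)| < 1 := by
    rw [abs_div, abs_of_pos hm1, div_lt_one hm1, abs_mul, abs_of_pos hm]
    nlinarith [abs_le.2 ⟨hz₀, hz₁⟩]
  have hterm : ∀ i : ℕ, geomOffspring m n i * z ^ i =
      (1 + m n)⁻¹ * (m n * z / (1 + m n)) ^ i := by
    intro i
    rw [geomOffspring, div_pow, mul_pow, pow_succ]
    field_simp
  have hne : 1 - m n * z / (1 + m n) ≠ 0 := by
    linarith [(abs_lt.1 hratio).2]
  rw [Phi, tsum_congr hterm, tsum_mul_left, tsum_geometric_of_abs_lt_one hratio]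
  field_simp
  ring_nf

lemma inv_one_sub_inv_one_add_mul {a z : ℝ} (ha : 0 < a) (hz : z < 1) :
    (1 - (1 + a * (1 - z))⁻¹)⁻¹ = 1 + a⁻¹ * (1 - z)⁻¹ := by
  have hz' : 0 < 1 - z := by linarith
  have hd : 0 < 1 + a * (1 - z) := by positivity
  field_simp
  ring

lemma inv_one_sub_hseq_geomOffspring (hm : ∀ n, 0 < m n) (n : ℕ) {z : ℝ} (hz₀ : -1 ≤ z)
    (hz₁ : z < 1) :
    (1 - Hseq (geomOffspring m) n z)⁻¹ =
      ∑ k ∈ range n, invProd m k + invProd m n * (1 - z)⁻¹ := by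
  induction n generalizing z with
  | zero => simp [Hseq, invProd]
  | succ n ih =>
    have hd : 0 < 1 + m n * (1 - z) := by nlinarith [hm n]
    have hphi₀ : -1 ≤ (1 + m n * (1 - z))⁻¹ := by linarith [inv_pos.2 hd]
    have hphi₁ : (1 + m n * (1 - z))⁻¹ < 1 := inv_lt_one_of_one_lt₀ (by nlinarith [hm n])
    rw [hseq_succ_apply, phi_geomOffspring (hm n) hz₀ hz₁.le, ih hphi₀ hphi₁,
      inv_one_sub_inv_one_add_mul (hm n) hz₁, sum_range_succ, invProd_succ]
    ring

lemma sum_range_succ_invProd_le (hm : ∀ n, 0 < m n)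
    (hsum : Summable fun n => invProd m (n + 1)) (n : ℕ) :
    ∑ k ∈ range (n + 1), invProd m k ≤ 1 + ∑' k, invProd m (k + 1) := by
  rw [sum_range_succ', add_comm]
  gcongr
  · simp [invProd]
  · exact hsum.sum_le_tsum _ fun k _ => (invProd_pos hm _).le

lemma hseq_geomOffspring_zero_le (hm : ∀ n, 0 < m n)
    (hsum : Summable fun n => invProd m (n + 1)) (n : ℕ) :
    Hseq (geomOffspring m) n 0 ≤ 1 - (1 + ∑' k, invProd m (k + 1))⁻¹ := by
  have hS : (1 - Hseq (geomOffspring m) n 0)⁻¹ = ∑ k ∈ range (n + 1), invProd m k := by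
    rw [inv_one_sub_hseq_geomOffspring hm n (by norm_num) zero_lt_one, sum_range_succ]
    simp
  have hpos : 0 < ∑ k ∈ range (n + 1), invProd m k :=
    sum_pos (fun k _ => invProd_pos hm k) nonempty_range_add_one
  have hle : (1 + ∑' k, invProd m (k + 1))⁻¹ ≤ 1 - Hseq (geomOffspring m) n 0 := by
    rw [← inv_inv (1 - Hseq _ n 0), hS]
    exact inv_anti₀ hpos (sum_range_succ_invProd_le hm hsum n)
  linarith

end

/-- the BPVE with geometric offspring distributions
`ρ_n(i) = m_n^i/(1+m_n)^{i+1}` (first moment `m_n`) survives whenever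
`∑_n (∏_{j=0}^n m_j)⁻¹ < ∞`. -/
theorem geometric_bpve_survival (m : ℕ → ℝ) (hm : ∀ n, 0 < m n)
    (hsum : Summable fun n => (∏ j ∈ Finset.range (n + 1), m j)⁻¹)
    (pe : ℝ)
    (hpe : Tendsto
      (fun n => Hseq (fun n i => m n ^ i / (1 + m n) ^ (i + 1)) n 0) atTop (nhds pe)) :
    pe < 1 := by
  have hT : 0 < 1 + ∑' k, invProd m (k + 1) :=
    add_pos_of_pos_of_nonneg one_pos (tsum_nonneg fun k => (invProd_pos hm _).le)
  have hbound : pe ≤ 1 - (1 + ∑' k, invProd m (k + 1))⁻¹ :=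
    le_of_tendsto' hpe (hseq_geomOffspring_zero_le hm hsum)
  linarith [inv_pos.2 hT]
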